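/- arXiv:0804.2842 — 3 statements merged into one kernel-verified Lean document; each statement's English description precedes it below -/
import Mathlib

section
/- Let u be a smooth plurisubharmonic function on a neighborhood V of the origin in C^n with u(0)=0, and let r(z,z_{n+1}) = 2·Re(z_{n+1}) + u(z) on V × C ⊂ C^{n+1}. Suppose there exist a neighborhood U with compact closure contained in V, a constant C > 0, and a parameter ε with 0 < ε ≤ 1/2, such that for each sufficiently small δ > 0 there is a smooth function ρ_δ : U → R with (i) 0 ≤ ρ_δ(z) ≤ 1 for all z ∈ U, and (ii) H_{u/δ + ρ_δ}(z; s) ≥ C·δ^{-2ε}·|s|² for all z ∈ U and all s ∈ C^n. Then there exist constants C' > 0 and C'' > 0, independent of δ, such that for every sufficiently small δ > 0 there is a smooth plurisubharmonic function λ_δ on U × C satisfying: |λ_δ(z')| ≤ C' for all z' ∈ U × C with r(z') < δ, and H_{λ_δ}(z'; t) ≥ C''·δ^{-2ε}·|t|² for all z' ∈ U × C with −δ < r(z') ≤ 0 and all t ∈ C^{n+1}. -/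
set_option maxHeartbeats 1000000

open scoped BigOperators

noncomputable section

abbrev Cn (n : ℕ) := EuclideanSpace ℂ (Fin n)

/-- Complex Hessian (Levi form) of a real-valued function on a complex normed space:
`H_f(z; s) = (1/4)(D²f(z)[s,s] + D²f(z)[I•s, I•s]) = Σ_{i,j} f_{z_i z̄_j}(z) s_i s̄_j`. -/
noncomputable def levi {E : Type*} [NormedAddCommGroup E] [NormedSpace ℂ E]
    (f : E → ℝ) (z s : E) : ℝ :=
  (1 / 4) * (iteratedFDeriv ℝ 2 f z ![s, s]
    + iteratedFDeriv ℝ 2 f z ![Complex.I • s, Complex.I • s])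

/-- Plurisubharmonic on a set: smooth there with positive semidefinite complex Hessian. -/
def PSHOn {E : Type*} [NormedAddCommGroup E] [NormedSpace ℂ E]
    (f : E → ℝ) (V : Set E) : Prop :=
  ContDiffOn ℝ (⊤ : ℕ∞) f V ∧ ∀ z ∈ V, ∀ s : E, 0 ≤ levi f z s

/-- Projection `C^{n+1} → C^n` onto the first `n` coordinates. -/
def proj (n : ℕ) (w : Cn (n + 1)) : Cn n := WithLp.toLp 2 (fun i : Fin n => w i.castSucc)

/-- Defining function `r(z, z_{n+1}) = 2 Re z_{n+1} + u(z)` of the rigid domain. -/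
def rfun (n : ℕ) (u : Cn n → ℝ) (w : Cn (n + 1)) : ℝ :=
  2 * (w (Fin.last n)).re + u (proj n w)

section Helpers

variable {E F : Type*} [NormedAddCommGroup E] [NormedSpace ℂ E]
  [NormedAddCommGroup F] [NormedSpace ℂ F]

lemma levi_eq (f : E → ℝ) (z s : E) :
    levi f z s = (1 / 4) * (fderiv ℝ (fderiv ℝ f) z s s
      + fderiv ℝ (fderiv ℝ f) z (Complex.I • s) (Complex.I • s)) := by
  simp [levi, iteratedFDeriv_two_apply]

lemma levi_add_on (f g : E → ℝ) {S : Set E} (hS : IsOpen S)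
    (hf : ContDiffOn ℝ (⊤ : ℕ∞) f S) (hg : ContDiffOn ℝ (⊤ : ℕ∞) g S) {w : E} (hw : w ∈ S) (t : E) :
    levi (fun x => f x + g x) w t = levi f w t + levi g w t := by
  have hfd : ∀ x ∈ S, DifferentiableAt ℝ f x := fun x hx =>
    (hf.contDiffAt (hS.mem_nhds hx)).differentiableAt (by simp)
  have hgd : ∀ x ∈ S, DifferentiableAt ℝ g x := fun x hx =>
    (hg.contDiffAt (hS.mem_nhds hx)).differentiableAt (by simp)
  have hev : fderiv ℝ (fun x => f x + g x) =ᶠ[nhds w]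
      fun x => fderiv ℝ f x + fderiv ℝ g x :=
    Filter.eventually_of_mem (hS.mem_nhds hw) (fun x hx => fderiv_add (hfd x hx) (hgd x hx))
  have hfd2 : DifferentiableAt ℝ (fderiv ℝ f) w :=
    (((hf.contDiffAt (hS.mem_nhds hw)).fderiv_right (m := 1) (WithTop.coe_le_coe.mpr le_top))).differentiableAt one_ne_zero
  have hgd2 : DifferentiableAt ℝ (fderiv ℝ g) w :=
    (((hg.contDiffAt (hS.mem_nhds hw)).fderiv_right (m := 1) (WithTop.coe_le_coe.mpr le_top))).differentiableAt one_ne_zero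
  have key : fderiv ℝ (fderiv ℝ (fun x => f x + g x)) w
      = fderiv ℝ (fderiv ℝ f) w + fderiv ℝ (fderiv ℝ g) w := by
    rw [hev.fderiv_eq, fderiv_fun_add hfd2 hgd2]
  simp only [levi_eq, key, ContinuousLinearMap.add_apply]
  ring

lemma levi_const_mul_on (f : E → ℝ) (c : ℝ) {S : Set E} (hS : IsOpen S)
    (hf : ContDiffOn ℝ (⊤ : ℕ∞) f S) {w : E} (hw : w ∈ S) (t : E) :
    levi (fun x => c * f x) w t = c * levi f w t := by
  have hfd : ∀ x ∈ S, DifferentiableAt ℝ f x := fun x hx =>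
    (hf.contDiffAt (hS.mem_nhds hx)).differentiableAt (by simp)
  have hev : fderiv ℝ (fun x => c * f x) =ᶠ[nhds w]
      fun x => c • fderiv ℝ f x :=
    Filter.eventually_of_mem (hS.mem_nhds hw)
      (fun x hx => by rw [fderiv_const_mul (hfd x hx)])
  have hfd2 : DifferentiableAt ℝ (fderiv ℝ f) w :=
    (((hf.contDiffAt (hS.mem_nhds hw)).fderiv_right (m := 1) (WithTop.coe_le_coe.mpr le_top))).differentiableAt one_ne_zero
  have key : fderiv ℝ (fderiv ℝ (fun x => c * f x)) w
      = c • fderiv ℝ (fderiv ℝ f) w := by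
    rw [hev.fderiv_eq, fderiv_fun_const_smul hfd2]
  simp only [levi_eq, key, ContinuousLinearMap.coe_smul', Pi.smul_apply,
    ContinuousLinearMap.smul_apply, smul_eq_mul]
  ring

lemma levi_exp_comp (ℓ : E →L[ℝ] ℝ) (A : E →L[ℂ] F) (ψ : F → ℝ) {W : Set F}
    (hW : IsOpen W) (hψ : ContDiffOn ℝ (⊤ : ℕ∞) ψ W) {w : E} (hw : A w ∈ W) (t : E) :
    levi (fun x => Real.exp (ℓ x + ψ (A x))) w t
      = Real.exp (ℓ w + ψ (A w)) * (levi ψ (A w) (A t)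
        + ((ℓ t + fderiv ℝ ψ (A w) (A t)) ^ 2
          + (ℓ (Complex.I • t) + fderiv ℝ ψ (A w) (A (Complex.I • t))) ^ 2) / 4) := by
  set AR := A.restrictScalars ℝ with hAR
  have hARapp : ∀ x, AR x = A x := fun _ => rfl
  set S : Set E := A ⁻¹' W with hSdef
  have hSo : IsOpen S := hW.preimage A.continuous
  have hwS : w ∈ S := hw
  have hg' : ∀ x ∈ S, HasFDerivAt (fun y => ℓ y + ψ (A y))
      (ℓ + (fderiv ℝ ψ (A x)).comp AR) x := by
    intro x hx
    have hψd : DifferentiableAt ℝ ψ (A x) :=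
      (hψ.contDiffAt (hW.mem_nhds hx)).differentiableAt (by simp)
    have h2 : HasFDerivAt (fun y => ψ (A y)) ((fderiv ℝ ψ (A x)).comp AR) x :=
      (hψd.hasFDerivAt).comp x (AR.hasFDerivAt)
    exact ℓ.hasFDerivAt.add h2
  have hev : fderiv ℝ (fun y => Real.exp (ℓ y + ψ (A y))) =ᶠ[nhds w]
      fun x => Real.exp (ℓ x + ψ (A x)) • (ℓ + (fderiv ℝ ψ (A x)).comp AR) :=
    Filter.eventually_of_mem (hSo.mem_nhds hwS)
      (fun x hx => ((hg' x hx).exp).fderiv)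
  have hψ2 : DifferentiableAt ℝ (fderiv ℝ ψ) (A w) :=
    ((hψ.contDiffAt (hW.mem_nhds hw)).fderiv_right (m := 1) (WithTop.coe_le_coe.mpr le_top)).differentiableAt one_ne_zero
  set ψ'' := fderiv ℝ (fderiv ℝ ψ) (A w) with hψ''def
  set compR : (F →L[ℝ] ℝ) →L[ℝ] (E →L[ℝ] ℝ) :=
    (ContinuousLinearMap.compL ℝ E F ℝ).flip AR with hcompR
  have hcompRapp : ∀ L : F →L[ℝ] ℝ, compR L = L.comp AR := fun L => rfl
  have inner2 : HasFDerivAt (fun x => fderiv ℝ ψ (A x)) (ψ''.comp AR) w :=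
    (hψ2.hasFDerivAt).comp w (AR.hasFDerivAt)
  have inner3 : HasFDerivAt (fun x => (fderiv ℝ ψ (A x)).comp AR)
      (compR.comp (ψ''.comp AR)) w := by
    have := (compR.hasFDerivAt (x := fderiv ℝ ψ (A w))).comp w inner2
    exact this
  have inner4 : HasFDerivAt (fun x => ℓ + (fderiv ℝ ψ (A x)).comp AR)
      (compR.comp (ψ''.comp AR)) w := by
    have := (hasFDerivAt_const ℓ w).fun_add inner3
    simpa using this
  set g := fun y => ℓ y + ψ (A y) with hgdef
  set Dg := ℓ + (fderiv ℝ ψ (A w)).comp AR with hDg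
  have main : HasFDerivAt
      (fun x => Real.exp (ℓ x + ψ (A x)) • (ℓ + (fderiv ℝ ψ (A x)).comp AR))
      (Real.exp (g w) • (compR.comp (ψ''.comp AR))
        + (Real.exp (g w) • Dg).smulRight Dg) w :=
    HasFDerivAt.smul ((hg' w hwS).exp) inner4
  have hD2 : fderiv ℝ (fderiv ℝ (fun y => Real.exp (ℓ y + ψ (A y)))) w
      = Real.exp (g w) • (compR.comp (ψ''.comp AR))
        + (Real.exp (g w) • Dg).smulRight Dg := by
    rw [hev.fderiv_eq]; exact main.fderiv
  have happly : ∀ v : E,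
      fderiv ℝ (fderiv ℝ (fun y => Real.exp (ℓ y + ψ (A y)))) w v v
        = Real.exp (g w) * (ψ'' (A v) (A v) + (ℓ v + fderiv ℝ ψ (A w) (A v)) ^ 2) := by
    intro v
    rw [hD2]
    simp [hcompRapp, hDg, ContinuousLinearMap.smulRight_apply, smul_eq_mul, hARapp]
    ring
  have hAI : A (Complex.I • t) = Complex.I • A t := A.map_smul _ _
  rw [levi_eq, happly t, happly (Complex.I • t), levi_eq ψ (A w) (A t), hAI]
  simp only [hgdef]
  ring

end Helpers

def projCLM (n : ℕ) : Cn (n + 1) →L[ℂ] Cn n :=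
  LinearMap.toContinuousLinearMap
    { toFun := proj n
      map_add' := fun _ _ => rfl
      map_smul' := by intro c x; ext i; simp [proj] }

lemma projCLM_apply (n : ℕ) (w : Cn (n + 1)) : projCLM n w = proj n w := rfl

def lastRe (n : ℕ) : Cn (n + 1) →L[ℝ] ℝ :=
  LinearMap.toContinuousLinearMap
    { toFun := fun w => 2 * (w (Fin.last n)).re
      map_add' := by intro w w'; simp [Complex.add_re]; ring
      map_smul' := by intro c w; simp [Complex.smul_re]; ring }

lemma lastRe_apply (n : ℕ) (w : Cn (n + 1)) : lastRe n w = 2 * (w (Fin.last n)).re := rfl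

lemma norm_sq_split (n : ℕ) (t : Cn (n + 1)) :
    ‖t‖ ^ 2 = ‖proj n t‖ ^ 2 + ‖t (Fin.last n)‖ ^ 2 := by
  have h1 : ‖t‖ ^ 2 = ∑ i, ‖t i‖ ^ 2 := by
    rw [EuclideanSpace.norm_eq, Real.sq_sqrt (Finset.sum_nonneg fun i _ => sq_nonneg _)]
  have h2 : ‖proj n t‖ ^ 2 = ∑ i : Fin n, ‖t i.castSucc‖ ^ 2 := by
    rw [EuclideanSpace.norm_eq, Real.sq_sqrt (Finset.sum_nonneg fun i _ => sq_nonneg _)]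
    rfl
  rw [h1, h2, Fin.sum_univ_castSucc]

/-- the Main Lemma, with conclusion in the form of Catlin's sufficient
condition for a subelliptic estimate of order ε. -/
theorem main_lemma (n : ℕ) (V : Set (Cn n)) (hV : IsOpen V) (h0V : (0 : Cn n) ∈ V)
    (u : Cn n → ℝ) (hu : PSHOn u V) (hu0 : u 0 = 0)
    (U : Set (Cn n)) (hUo : IsOpen U) (h0U : (0 : Cn n) ∈ U)
    (hUV : closure U ⊆ V) (hUc : IsCompact (closure U))
    (C ε : ℝ) (hC : 0 < C) (hε : 0 < ε) (hε' : ε ≤ 1 / 2)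
    (hres : ∃ δ₀ > (0 : ℝ), ∀ δ : ℝ, 0 < δ → δ < δ₀ →
      ∃ ρ : Cn n → ℝ, ContDiffOn ℝ (⊤ : ℕ∞) ρ U ∧
        (∀ z ∈ U, 0 ≤ ρ z ∧ ρ z ≤ 1) ∧
        (∀ z ∈ U, ∀ s : Cn n,
          C * δ ^ (-(2 * ε)) * ‖s‖ ^ 2 ≤ levi (fun w => u w / δ + ρ w) z s)) :
    ∃ C' > (0 : ℝ), ∃ C'' > (0 : ℝ), ∃ δ₁ > (0 : ℝ), ∀ δ : ℝ, 0 < δ → δ < δ₁ →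
      ∃ lam : Cn (n + 1) → ℝ,
        PSHOn lam {w : Cn (n + 1) | proj n w ∈ U} ∧
        (∀ w : Cn (n + 1), proj n w ∈ U → rfun n u w < δ → |lam w| ≤ C') ∧
        (∀ w : Cn (n + 1), proj n w ∈ U → -δ < rfun n u w → rfun n u w ≤ 0 →
          ∀ t : Cn (n + 1), C'' * δ ^ (-(2 * ε)) * ‖t‖ ^ 2 ≤ levi lam w t) := by
  classical
  obtain ⟨δ₀, hδ₀, hresδ⟩ := hres
  have hUsubV : U ⊆ V := subset_closure.trans hUV
  -- uniform bound on the gradient of u on the closure of U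
  have hfc : ContinuousOn (fderiv ℝ u) (closure U) :=
    (hu.1.continuousOn_fderiv_of_isOpen hV (by simp)).mono hUV
  obtain ⟨K, hK⟩ := hUc.exists_bound_of_continuousOn hfc
  set K' : ℝ := max K 0 with hK'def
  have hK'0 : 0 ≤ K' := le_max_right _ _
  have hKb : ∀ z ∈ closure U, ‖fderiv ℝ u z‖ ≤ K' :=
    fun z hz => (hK z hz).trans (le_max_left _ _)
  set C'' : ℝ := Real.exp (-1) * min C 6⁻¹ / (1 + 2 * K' ^ 2) with hC''def
  have hC''pos : 0 < C'' := by
    apply div_pos (mul_pos (Real.exp_pos _) (lt_min hC (by norm_num)))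
    positivity
  refine ⟨Real.exp 2 + Real.exp 1, by positivity, C'', hC''pos, min δ₀ 1,
    lt_min hδ₀ one_pos, ?_⟩
  intro δ hδ hδ1
  have hδδ₀ : δ < δ₀ := lt_of_lt_of_le hδ1 (min_le_left _ _)
  have hδle1 : δ ≤ 1 := le_of_lt (lt_of_lt_of_le hδ1 (min_le_right _ _))
  have hδne : δ ≠ 0 := ne_of_gt hδ
  obtain ⟨ρ, hρs, hρb, hρlevi⟩ := hresδ δ hδ hδδ₀
  set D : ℝ := δ ^ (-(2 * ε)) with hDdef
  have hD : 0 < D := Real.rpow_pos_of_pos hδ _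
  set ℓδ : Cn (n + 1) →L[ℝ] ℝ := δ⁻¹ • lastRe n with hℓδ
  have hℓδapp : ∀ x : Cn (n + 1), ℓδ x = δ⁻¹ * (2 * (x (Fin.last n)).re) := by
    intro x
    simp [hℓδ, lastRe_apply]
  -- the two inner functions and the candidate λ
  set S : Set (Cn (n + 1)) := {w : Cn (n + 1) | proj n w ∈ U} with hSdef
  have hSo : IsOpen S := hUo.preimage (projCLM n).continuous
  have harg1 : ∀ w : Cn (n + 1),
      ℓδ w + (fun z => u z / δ + ρ z) (projCLM n w) = rfun n u w / δ + ρ (proj n w) := by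
    intro w
    rw [hℓδapp, projCLM_apply, rfun]
    field_simp
    ring
  have harg2 : ∀ w : Cn (n + 1),
      ℓδ w + (fun z => δ⁻¹ * u z) (projCLM n w) = rfun n u w / δ := by
    intro w
    rw [hℓδapp, projCLM_apply, rfun]
    field_simp
  -- smoothness of the inner functions
  have hhsm : ContDiffOn ℝ (⊤ : ℕ∞) (fun z => u z / δ + ρ z) U :=
    ((hu.1.mono hUsubV).div_const δ).add hρs
  have hψ₂sm : ContDiffOn ℝ (⊤ : ℕ∞) (fun z => δ⁻¹ * u z) V := contDiffOn_const.mul hu.1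
  have hg₁sm : ContDiffOn ℝ (⊤ : ℕ∞) (fun x => ℓδ x + (fun z => u z / δ + ρ z) (projCLM n x)) S :=
    (ℓδ.contDiff.contDiffOn).add
      (hhsm.comp (((projCLM n).contDiff.restrict_scalars ℝ).contDiffOn) (fun x hx => hx))
  have hg₂sm : ContDiffOn ℝ (⊤ : ℕ∞) (fun x => ℓδ x + (fun z => δ⁻¹ * u z) (projCLM n x)) S :=
    (ℓδ.contDiff.contDiffOn).add
      (hψ₂sm.comp (((projCLM n).contDiff.restrict_scalars ℝ).contDiffOn) (fun x hx => hUsubV hx))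
  have hf₁sm : ContDiffOn ℝ (⊤ : ℕ∞)
      (fun x => Real.exp (ℓδ x + (fun z => u z / δ + ρ z) (projCLM n x))) S :=
    Real.contDiff_exp.comp_contDiffOn hg₁sm
  have hf₂sm : ContDiffOn ℝ (⊤ : ℕ∞)
      (fun x => Real.exp (ℓδ x + (fun z => δ⁻¹ * u z) (projCLM n x))) S :=
    Real.contDiff_exp.comp_contDiffOn hg₂sm
  -- the Levi form of λ at points of S
  have hlevi : ∀ w ∈ S, ∀ t : Cn (n + 1),
      levi (fun x => Real.exp (ℓδ x + (fun z => u z / δ + ρ z) (projCLM n x))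
        + Real.exp (ℓδ x + (fun z => δ⁻¹ * u z) (projCLM n x))) w t
      = Real.exp (rfun n u w / δ + ρ (proj n w))
          * (levi (fun z => u z / δ + ρ z) (proj n w) (proj n t)
            + ((ℓδ t + fderiv ℝ (fun z => u z / δ + ρ z) (proj n w) (proj n t)) ^ 2
              + (ℓδ (Complex.I • t) + fderiv ℝ (fun z => u z / δ + ρ z) (proj n w)
                  (Complex.I • proj n t)) ^ 2) / 4)
        + Real.exp (rfun n u w / δ)
          * (δ⁻¹ * levi u (proj n w) (proj n t)
            + ((ℓδ t + fderiv ℝ (fun z => δ⁻¹ * u z) (proj n w) (proj n t)) ^ 2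
              + (ℓδ (Complex.I • t) + fderiv ℝ (fun z => δ⁻¹ * u z) (proj n w)
                  (Complex.I • proj n t)) ^ 2) / 4) := by
    intro w hw t
    have hwU : projCLM n w ∈ U := hw
    have hwV : projCLM n w ∈ V := hUsubV hw
    rw [levi_add_on _ _ hSo hf₁sm hf₂sm hw t,
      levi_exp_comp ℓδ (projCLM n) (fun z => u z / δ + ρ z) hUo hhsm hwU t,
      levi_exp_comp ℓδ (projCLM n) (fun z => δ⁻¹ * u z) hV hψ₂sm hwV t,
      harg1, harg2,
      levi_const_mul_on u δ⁻¹ hV hu.1 hwV]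
    rw [(projCLM n).map_smul]
    rw [projCLM_apply, projCLM_apply]
  refine ⟨fun x => Real.exp (ℓδ x + (fun z => u z / δ + ρ z) (projCLM n x))
        + Real.exp (ℓδ x + (fun z => δ⁻¹ * u z) (projCLM n x)), ⟨?_, ?_⟩, ?_, ?_⟩
  · exact hf₁sm.add hf₂sm
  · -- plurisubharmonicity on S
    intro w hw t
    rw [hlevi w hw t]
    have h1 : 0 ≤ levi (fun z => u z / δ + ρ z) (proj n w) (proj n t) := by
      refine le_trans ?_ (hρlevi _ hw _)
      exact mul_nonneg (mul_nonneg hC.le (Real.rpow_pos_of_pos hδ _).le) (sq_nonneg _)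
    have h2 : 0 ≤ levi u (proj n w) (proj n t) := hu.2 _ (hUsubV hw) _
    have h3 : (0:ℝ) ≤ δ⁻¹ := inv_nonneg.mpr hδ.le
    apply add_nonneg
    · apply mul_nonneg (Real.exp_pos _).le
      exact add_nonneg h1 (by positivity)
    · apply mul_nonneg (Real.exp_pos _).le
      exact add_nonneg (mul_nonneg h3 h2) (by positivity)
  · -- boundedness where r < δ
    intro w hw hr
    have hρz := hρb (proj n w) hw
    have hrδ : rfun n u w / δ < 1 := (div_lt_one hδ).mpr hr
    have hb1 : Real.exp (ℓδ w + (fun z => u z / δ + ρ z) (projCLM n w)) ≤ Real.exp 2 := by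
      rw [harg1]
      exact Real.exp_le_exp.mpr (by linarith [hρz.2])
    have hb2 : Real.exp (ℓδ w + (fun z => δ⁻¹ * u z) (projCLM n w)) ≤ Real.exp 1 := by
      rw [harg2]
      exact Real.exp_le_exp.mpr (by linarith)
    rw [abs_of_pos (by positivity)]
    exact add_le_add hb1 hb2
  · -- the Hessian estimate on the strip
    intro w hw hr1 hr2 t
    set z := proj n w with hz
    set s := proj n t with hs
    set τ := t (Fin.last n) with hτ
    have hzcl : z ∈ closure U := subset_closure hw
    have hud : DifferentiableAt ℝ u z :=
      (hu.1.contDiffAt (hV.mem_nhds (hUsubV hw))).differentiableAt (by simp)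
    have hfψ₂ : fderiv ℝ (fun z => δ⁻¹ * u z) z = δ⁻¹ • fderiv ℝ u z :=
      fderiv_const_mul hud δ⁻¹
    set a : ℝ := fderiv ℝ u z s with ha
    set b : ℝ := fderiv ℝ u z (Complex.I • s) with hb
    have hIτ : (Complex.I • t) (Fin.last n) = Complex.I * τ := rfl
    have hX1 : ℓδ t + fderiv ℝ (fun z => δ⁻¹ * u z) z s = δ⁻¹ * (2 * τ.re + a) := by
      rw [hfψ₂, hℓδapp]
      simp [smul_eq_mul, ha]
      ring
    have hX2 : ℓδ (Complex.I • t) + fderiv ℝ (fun z => δ⁻¹ * u z) z (Complex.I • s)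
        = δ⁻¹ * (-(2 * τ.im) + b) := by
      rw [hfψ₂, hℓδapp, hIτ]
      simp [smul_eq_mul, hb, Complex.mul_re]
      ring
    -- bounds on a and b
    have hanorm : |a| ≤ K' * ‖s‖ := by
      calc |a| = ‖fderiv ℝ u z s‖ := rfl
        _ ≤ ‖fderiv ℝ u z‖ * ‖s‖ := (fderiv ℝ u z).le_opNorm s
        _ ≤ K' * ‖s‖ := mul_le_mul_of_nonneg_right (hKb z hzcl) (norm_nonneg _)
    have hbnorm : |b| ≤ K' * ‖s‖ := by
      calc |b| = ‖fderiv ℝ u z (Complex.I • s)‖ := rfl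
        _ ≤ ‖fderiv ℝ u z‖ * ‖Complex.I • s‖ := (fderiv ℝ u z).le_opNorm _
        _ = ‖fderiv ℝ u z‖ * ‖s‖ := by rw [norm_smul]; simp
        _ ≤ K' * ‖s‖ := mul_le_mul_of_nonneg_right (hKb z hzcl) (norm_nonneg _)
    have hab : a ^ 2 + b ^ 2 ≤ 2 * K' ^ 2 * ‖s‖ ^ 2 := by
      have h1 : a ^ 2 ≤ (K' * ‖s‖) ^ 2 := by
        rw [← sq_abs a]; exact pow_le_pow_left₀ (abs_nonneg _) hanorm 2
      have h2 : b ^ 2 ≤ (K' * ‖s‖) ^ 2 := by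
        rw [← sq_abs b]; exact pow_le_pow_left₀ (abs_nonneg _) hbnorm 2
      calc a ^ 2 + b ^ 2 ≤ (K' * ‖s‖) ^ 2 + (K' * ‖s‖) ^ 2 := add_le_add h1 h2
        _ = 2 * K' ^ 2 * ‖s‖ ^ 2 := by ring
    -- norm splitting
    have hns : ‖t‖ ^ 2 = ‖s‖ ^ 2 + ‖τ‖ ^ 2 := norm_sq_split n t
    have hτsq : ‖τ‖ ^ 2 = τ.re ^ 2 + τ.im ^ 2 := by
      rw [Complex.sq_norm, Complex.normSq_apply]
      ring
    have hrδ1 : -1 < rfun n u w / δ := by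
      rw [lt_div_iff₀ hδ]
      linarith
    have hρz := hρb z hw
    -- rpow comparison
    have hDle : D ≤ δ⁻¹ ^ 2 := by
      have h1 : δ ^ (-(2 * ε)) ≤ δ ^ (-(2:ℝ)) :=
        Real.rpow_le_rpow_of_exponent_ge hδ hδle1 (by linarith)
      have h2 : δ ^ (-(2:ℝ)) = δ⁻¹ ^ 2 := by
        rw [Real.rpow_neg hδ.le]
        rw [show ((2:ℝ) = ((2:ℕ):ℝ)) by norm_num, Real.rpow_natCast δ 2]
        rw [inv_pow]
      rw [hDdef, ← h2]
      exact h1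
    -- rewrite the Levi form and abstract the pieces
    rw [hlevi w hw t, ← hz, ← hs, hX1, hX2]
    set nt := ‖t‖ with hnt
    set nS := ‖s‖ with hnS
    set nT := ‖τ‖ with hnT
    set x := τ.re with hx
    set y := τ.im with hy
    set E1 := Real.exp (rfun n u w / δ + ρ z) with hE1d
    set E2 := Real.exp (rfun n u w / δ) with hE2d
    set Lh := levi (fun z => u z / δ + ρ z) z s with hLhd
    set Lu := levi u z s with hLud
    set q1 := ℓδ t + fderiv ℝ (fun z => u z / δ + ρ z) z s with hq1
    set q2 := ℓδ (Complex.I • t) + fderiv ℝ (fun z => u z / δ + ρ z) z (Complex.I • s) with hq2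
    clear_value nt nS nT x y E1 E2 Lh Lu q1 q2 z s τ a b D K' C''
    have hE1b : Real.exp (-1) ≤ E1 := by
      rw [hE1d]; exact Real.exp_le_exp.mpr (by linarith only [hρz.1, hrδ1])
    have hE2b : Real.exp (-1) ≤ E2 := by
      rw [hE2d]; exact Real.exp_le_exp.mpr (by linarith only [hrδ1])
    have hE1p : (0:ℝ) < E1 := by rw [hE1d]; exact Real.exp_pos _
    have hE2p : (0:ℝ) < E2 := by rw [hE2d]; exact Real.exp_pos _
    have hLhb : C * D * nS ^ 2 ≤ Lh := by
      rw [hLhd, hnS]; exact hρlevi z hw s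
    have hLub : 0 ≤ Lu := by rw [hLud]; exact hu.2 z (hUsubV hw) s
    have hq12 : 0 ≤ (q1 ^ 2 + q2 ^ 2) / 4 := by positivity
    have hnS0 : 0 ≤ nS := by rw [hnS]; exact norm_nonneg _
    have hnT0 : 0 ≤ nT := by rw [hnT]; exact norm_nonneg _
    have hδi0 : (0:ℝ) ≤ δ⁻¹ := inv_nonneg.mpr hδ.le
    have hT1 : Real.exp (-1) * (C * D * nS ^ 2) ≤ E1 * (Lh + (q1 ^ 2 + q2 ^ 2) / 4) :=
      mul_le_mul hE1b (by linarith only [hLhb, hq12])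
        (mul_nonneg (mul_nonneg hC.le hD.le) (sq_nonneg _)) hE1p.le
    by_cases hcase : nT ^ 2 ≤ 2 * K' ^ 2 * nS ^ 2
    · -- tangential case
      have hT2 : 0 ≤ E2 * (δ⁻¹ * Lu
          + ((δ⁻¹ * (2 * x + a)) ^ 2 + (δ⁻¹ * (-(2 * y) + b)) ^ 2) / 4) :=
        mul_nonneg hE2p.le (add_nonneg (mul_nonneg hδi0 hLub) (by positivity))
      have hkey : C'' * (1 + 2 * K' ^ 2) = Real.exp (-1) * min C 6⁻¹ := by
        rw [hC''def]; field_simp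
      have hminC : min C 6⁻¹ ≤ C := min_le_left _ _
      have hchain : C'' * D * nt ^ 2 ≤ Real.exp (-1) * (C * D * nS ^ 2) := by
        have e1 : C'' * D * nt ^ 2 ≤ C'' * D * ((1 + 2 * K' ^ 2) * nS ^ 2) := by
          apply mul_le_mul_of_nonneg_left _ (mul_nonneg hC''pos.le hD.le)
          rw [hns]; linarith only [hcase]
        have e3 : (C'' * (1 + 2 * K' ^ 2)) * (D * nS ^ 2)
            ≤ (Real.exp (-1) * C) * (D * nS ^ 2) := by
          apply mul_le_mul_of_nonneg_right _ (mul_nonneg hD.le (sq_nonneg _))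
          rw [hkey]
          exact mul_le_mul_of_nonneg_left hminC (Real.exp_pos _).le
        linarith only [e1, e3]
      linarith only [hT1, hT2, hchain]
    · -- normal case
      push_neg at hcase
      have hτK : 2 * K' ^ 2 * nS ^ 2 ≤ nT ^ 2 := hcase.le
      have hsq : (2 * x + a) ^ 2 + (-(2 * y) + b) ^ 2 ≥ 2 / 3 * (x ^ 2 + y ^ 2) := by
        have hab' : a ^ 2 + b ^ 2 ≤ x ^ 2 + y ^ 2 := by linarith only [hτsq, hab, hτK]
        linarith only [sq_nonneg (3 * x + 2 * a), sq_nonneg (3 * y - 2 * b), hab']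
      have hQ2 : D * nT ^ 2 / 6
          ≤ ((δ⁻¹ * (2 * x + a)) ^ 2 + (δ⁻¹ * (-(2 * y) + b)) ^ 2) / 4 := by
        have h1 : ((δ⁻¹ * (2 * x + a)) ^ 2 + (δ⁻¹ * (-(2 * y) + b)) ^ 2) / 4
            = δ⁻¹ ^ 2 * ((2 * x + a) ^ 2 + (-(2 * y) + b) ^ 2) / 4 := by ring
        rw [h1]
        have h2 : δ⁻¹ ^ 2 * (2 / 3 * (x ^ 2 + y ^ 2)) / 4
            ≤ δ⁻¹ ^ 2 * ((2 * x + a) ^ 2 + (-(2 * y) + b) ^ 2) / 4 := by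
          apply div_le_div_of_nonneg_right _ (by norm_num)
          exact mul_le_mul_of_nonneg_left hsq (by positivity)
        have h3 : D * nT ^ 2 / 6 ≤ δ⁻¹ ^ 2 * (2 / 3 * (x ^ 2 + y ^ 2)) / 4 := by
          rw [hτsq]
          have h4 : D * (x ^ 2 + y ^ 2) ≤ δ⁻¹ ^ 2 * (x ^ 2 + y ^ 2) :=
            mul_le_mul_of_nonneg_right hDle (by positivity)
          linarith only [h4]
        linarith only [h2, h3]
      have hT2 : Real.exp (-1) * (D * nT ^ 2 / 6)
          ≤ E2 * (δ⁻¹ * Lu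
            + ((δ⁻¹ * (2 * x + a)) ^ 2 + (δ⁻¹ * (-(2 * y) + b)) ^ 2) / 4) := by
        apply mul_le_mul hE2b _ (by positivity) hE2p.le
        have h3 : (0:ℝ) ≤ δ⁻¹ * Lu := mul_nonneg hδi0 hLub
        linarith only [hQ2, h3]
      have hmn : (0:ℝ) ≤ Real.exp (-1) * min C 6⁻¹ :=
        mul_nonneg (Real.exp_pos _).le (le_min hC.le (by norm_num))
      have honeK : (1:ℝ) ≤ 1 + 2 * K' ^ 2 := by linarith only [sq_nonneg K']
      have hC''leC : C'' ≤ Real.exp (-1) * C := by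
        rw [hC''def]
        refine (div_le_self hmn honeK).trans ?_
        exact mul_le_mul_of_nonneg_left (min_le_left _ _) (Real.exp_pos _).le
      have hC''le6 : C'' ≤ Real.exp (-1) * 6⁻¹ := by
        rw [hC''def]
        refine (div_le_self hmn honeK).trans ?_
        exact mul_le_mul_of_nonneg_left (min_le_right _ _) (Real.exp_pos _).le
      have e1 : C'' * D * nS ^ 2 ≤ Real.exp (-1) * (C * D * nS ^ 2) := by
        have h5 := mul_le_mul_of_nonneg_right hC''leC (mul_nonneg hD.le (sq_nonneg nS))
        linarith only [h5]
      have e2 : C'' * D * nT ^ 2 ≤ Real.exp (-1) * (D * nT ^ 2 / 6) := by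
        have h5 := mul_le_mul_of_nonneg_right hC''le6 (mul_nonneg hD.le (sq_nonneg nT))
        linarith only [h5]
      have hsplit : C'' * D * nt ^ 2 = C'' * D * nS ^ 2 + C'' * D * nT ^ 2 := by
        rw [hns]; ring
      linarith only [hT1, hT2, e1, e2, hsplit]

end
end

section
/- Let m_1, …, m_n be positive integers and set m = max{m_i : 1 ≤ i ≤ n}, and let q(z) = Σ_{i=1}^n |z_i|^{2m_i}. Let u be a smooth function on a neighborhood V of the origin in C^n with u(0)=0 satisfying H_u(z; s) ≥ H_q(z; s) for all z ∈ V and all s ∈ C^n. Then there exist a neighborhood U of 0 with compact closure contained in V and a constant C > 0 such that for every sufficiently small δ > 0 there is a smooth function ρ_δ : U → R with 0 ≤ ρ_δ ≤ 1 on U and H_{u/δ + ρ_δ}(z; s) ≥ C·δ^{-1/m}·|s|² for all z ∈ U and all s ∈ C^n. -/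
open scoped BigOperators

noncomputable section

namespace LeviAux

open Complex

/-- The real derivative of `normSq` at `w`, as a bilinear gadget. -/
def M : ℂ →L[ℝ] ℂ →L[ℝ] ℝ :=
  (2:ℝ) • (Complex.reCLM.smulRight Complex.reCLM + Complex.imCLM.smulRight Complex.imCLM)

lemma M_apply (w v : ℂ) : M w v = 2 * (w.re * v.re + w.im * v.im) := by
  simp [M]
  ring

lemma hasFDerivAt_normSq (w : ℂ) : HasFDerivAt Complex.normSq (M w) w := by
  have h1 : HasFDerivAt (fun z : ℂ => z.re) Complex.reCLM w := Complex.reCLM.hasFDerivAt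
  have h2 : HasFDerivAt (fun z : ℂ => z.im) Complex.imCLM w := Complex.imCLM.hasFDerivAt
  have h : HasFDerivAt (fun z : ℂ => z.re * z.re + z.im * z.im)
      ((w.re • Complex.reCLM + w.re • Complex.reCLM)
        + (w.im • Complex.imCLM + w.im • Complex.imCLM)) w := (h1.mul h1).add (h2.mul h2)
  have hfun : Complex.normSq = fun z : ℂ => z.re * z.re + z.im * z.im :=
    funext fun z => Complex.normSq_apply z
  rw [hfun]
  convert h using 1
  ext v
  simp [M]
  ring

lemma levi_1d (h h' h'' : ℝ → ℝ) (T : Set ℝ)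
    (hTm : ∀ t : ℝ, 0 ≤ t → t ∈ T)
    (hd1 : ∀ t ∈ T, HasDerivAt h (h' t) t)
    (hd2 : ∀ t ∈ T, HasDerivAt h' (h'' t) t)
    (z s : ℂ) :
    levi (fun w : ℂ => h (Complex.normSq w)) z s
      = (h' (Complex.normSq z) + Complex.normSq z * h'' (Complex.normSq z))
          * Complex.normSq s := by
  have hF : ∀ w : ℂ, HasFDerivAt (fun w : ℂ => h (Complex.normSq w))
      (h' (Complex.normSq w) • M w) w := fun w =>
    (hd1 _ (hTm _ (normSq_nonneg w))).comp_hasFDerivAt w (hasFDerivAt_normSq w)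
  have hfd : fderiv ℝ (fun w : ℂ => h (Complex.normSq w))
      = fun w => h' (Complex.normSq w) • M w := funext fun w => (hF w).fderiv
  have hc : HasFDerivAt (fun w : ℂ => h' (Complex.normSq w))
      (h'' (Complex.normSq z) • M z) z :=
    (hd2 _ (hTm _ (normSq_nonneg z))).comp_hasFDerivAt z (hasFDerivAt_normSq z)
  have hG : HasFDerivAt (fun w : ℂ => h' (Complex.normSq w) • M w)
      (h' (Complex.normSq z) • M + (h'' (Complex.normSq z) • M z).smulRight (M z)) z :=
    hc.smul (M.hasFDerivAt (x := z))
  have key : ∀ v : ℂ, iteratedFDeriv ℝ 2 (fun w : ℂ => h (Complex.normSq w)) z ![v, v]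
      = h' (Complex.normSq z) * (M v v)
        + h'' (Complex.normSq z) * (M z v) * (M z v) := by
    intro v
    rw [iteratedFDeriv_two_apply, hfd, hG.fderiv]
    simp [ContinuousLinearMap.smulRight_apply]
  have hIs : (Complex.I • s) = Complex.I * s := rfl
  unfold levi
  rw [key s, key (Complex.I • s)]
  rw [hIs]
  simp only [M_apply, Complex.normSq_apply, Complex.mul_re, Complex.mul_im,
    Complex.I_re, Complex.I_im]
  ring


lemma levi_comp_proj {n : ℕ} (g : ℂ → ℝ) (hg : ContDiff ℝ 2 g) (i : Fin n) (z s : Cn n) :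
    levi (fun w : Cn n => g (w i)) z s = levi g (z i) (s i) := by
  set L : Cn n →L[ℂ] ℂ := EuclideanSpace.proj i with hL
  set Lr : Cn n →L[ℝ] ℂ := L.restrictScalars ℝ with hLr
  have hfun : (fun w : Cn n => g (w i)) = g ∘ Lr := rfl
  have hit : ∀ x : Cn n, iteratedFDeriv ℝ 2 (g ∘ Lr) x =
      (iteratedFDeriv ℝ 2 g (Lr x)).compContinuousLinearMap fun _ => Lr :=
    fun x => Lr.iteratedFDeriv_comp_right hg x le_rfl
  have happ : ∀ v : Cn n, (fun j => Lr (![v, v] j)) = ![v i, v i] := by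
    intro v; funext j; fin_cases j <;> rfl
  unfold levi
  rw [hfun, hit z]
  rw [ContinuousMultilinearMap.compContinuousLinearMap_apply,
    ContinuousMultilinearMap.compContinuousLinearMap_apply, happ s, happ (Complex.I • s)]
  rfl

lemma levi_sum {E : Type*} [NormedAddCommGroup E] [NormedSpace ℂ E] {ι : Type*}
    (f : ι → E → ℝ) (u : Finset ι) (hf : ∀ j ∈ u, ContDiff ℝ 2 (f j)) (z s : E) :
    levi (fun w => ∑ j ∈ u, f j w) z s = ∑ j ∈ u, levi (f j) z s := by
  unfold levi
  have h := iteratedFDeriv_sum (𝕜 := ℝ) (i := 2) hf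
  rw [congrFun h z]
  simp only [Finset.sum_apply, ContinuousMultilinearMap.sum_apply]
  rw [← Finset.sum_add_distrib, Finset.mul_sum]

lemma levi_add_open {E : Type*} [NormedAddCommGroup E] [NormedSpace ℂ E]
    {V : Set E} (hV : IsOpen V) {f g : E → ℝ} {z : E} (hz : z ∈ V)
    (hf : ContDiffOn ℝ 2 f V) (hg : ContDiffOn ℝ 2 g V) (s : E) :
    levi (fun w => f w + g w) z s = levi f z s + levi g z s := by
  have h2 : ∀ F : E → ℝ, iteratedFDeriv ℝ 2 F z = iteratedFDerivWithin ℝ 2 F V z :=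
    fun F => (iteratedFDerivWithin_of_isOpen 2 hV hz).symm
  unfold levi
  rw [h2 (fun w => f w + g w), h2 f, h2 g,
    iteratedFDerivWithin_add_apply' (hf z hz) (hg z hz) hV.uniqueDiffOn hz]
  simp only [ContinuousMultilinearMap.add_apply]
  ring

lemma levi_smul_open {E : Type*} [NormedAddCommGroup E] [NormedSpace ℂ E]
    {V : Set E} (hV : IsOpen V) {f : E → ℝ} {z : E} (hz : z ∈ V)
    (hf : ContDiffOn ℝ 2 f V) (c : ℝ) (s : E) :
    levi (fun w => c • f w) z s = c * levi f z s := by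
  have h2 : ∀ F : E → ℝ, iteratedFDeriv ℝ 2 F z = iteratedFDerivWithin ℝ 2 F V z :=
    fun F => (iteratedFDerivWithin_of_isOpen 2 hV hz).symm
  have hsf : (fun w => c • f w) = c • f := rfl
  unfold levi
  rw [h2 (fun w => c • f w), h2 f, hsf,
    iteratedFDerivWithin_const_smul_apply (hf z hz) hV.uniqueDiffOn hz]
  simp only [ContinuousMultilinearMap.smul_apply, smul_eq_mul]
  ring


lemma rpow_le_rpow_exp {δ : ℝ} (hδ : 0 < δ) (hδ1 : δ < 1) {k M : ℕ} (hk : 1 ≤ k) (hkM : k ≤ M) :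
    δ ^ (-(1/(M:ℝ))) ≤ δ ^ (-(1/(k:ℝ))) := by
  apply Real.rpow_le_rpow_of_exponent_ge hδ hδ1.le
  have hk0 : (0:ℝ) < (k:ℝ) := by exact_mod_cast hk
  have : (1:ℝ)/(M:ℝ) ≤ 1/(k:ℝ) := by
    apply one_div_le_one_div_of_le hk0
    exact_mod_cast hkM
  linarith

set_option maxHeartbeats 1000000 in
lemma key_ineq (k M : ℕ) (hk : 1 ≤ k) (hkM : k ≤ M) (ε C δ t : ℝ)
    (hδ : 0 < δ) (hδ1 : δ < 1) (ht : 0 ≤ t)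
    (hε : 0 < ε) (hεM : ε ≤ 2 / 2^M)
    (hC0 : 0 < C) (hC1 : C ≤ ε * 4 / 27) (hC2 : C ≤ 1 / 2^M) :
    C * δ ^ (-(1/(M:ℝ))) ≤ (k:ℝ)^2 * t^(k-1) / δ
      + ε * (δ ^ (-(1/(k:ℝ)))) * (1 - δ ^ (-(1/(k:ℝ))) * t)
          / (1 + δ ^ (-(1/(k:ℝ))) * t)^3 := by
  set a := δ ^ (-(1/(k:ℝ))) with ha_def
  have ha : 0 < a := Real.rpow_pos_of_pos hδ _
  have h1at : 0 < 1 + a*t := by positivity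
  have hmono : δ ^ (-(1/(M:ℝ))) ≤ a := rpow_le_rpow_exp hδ hδ1 hk hkM
  have hb : 0 < δ ^ (-(1/(M:ℝ))) := Real.rpow_pos_of_pos hδ _
  have hat : 0 ≤ a * t := by positivity
  have h2M : (0:ℝ) < 2^M := by positivity
  rcases le_or_gt (a*t) (1/2) with hcase | hcase
  · -- small region: the bump term is strongly positive
    have hlow : ε * a * (4/27) ≤ ε * a * (1 - a*t) / (1+a*t)^3 := by
      rw [le_div_iff₀ (by positivity)]
      nlinarith [mul_nonneg hat hat, mul_nonneg (mul_nonneg hat hat) hat,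
        mul_pos hε ha, mul_nonneg (mul_pos hε ha).le hat,
        mul_nonneg (mul_nonneg (mul_pos hε ha).le hat) hat,
        mul_nonneg (mul_nonneg (mul_nonneg (mul_pos hε ha).le hat) hat) hat]
    have hfirst : (0:ℝ) ≤ (k:ℝ)^2 * t^(k-1) / δ := by positivity
    have : C * δ ^ (-(1/(M:ℝ))) ≤ ε * a * (4/27) := by
      calc C * δ ^ (-(1/(M:ℝ))) ≤ (ε * 4/27) * δ ^ (-(1/(M:ℝ))) := by
            apply mul_le_mul_of_nonneg_right hC1 hb.le
        _ ≤ (ε * 4/27) * a := by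
            apply mul_le_mul_of_nonneg_left hmono (by positivity)
        _ = ε * a * (4/27) := by ring
    linarith
  · -- big region: the pure power term dominates
    have hta : 1/(2*a) ≤ t := by
      rw [div_le_iff₀ (by positivity)]
      nlinarith
    have hsecond : -(ε * a / 4) ≤ ε * a * (1 - a*t) / (1+a*t)^3 := by
      rw [le_div_iff₀ (by positivity)]
      nlinarith [mul_nonneg hat hat, mul_nonneg (mul_nonneg hat hat) hat,
        mul_pos hε ha, mul_nonneg (mul_pos hε ha).le hat,
        mul_nonneg (mul_nonneg (mul_pos hε ha).le hat) hat,
        mul_nonneg (mul_nonneg (mul_nonneg (mul_pos hε ha).le hat) hat) hat]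
    have hainv : 1/a = δ ^ ((1:ℝ)/(k:ℝ)) := by
      rw [ha_def, Real.rpow_neg hδ.le, one_div, inv_inv]
    have hdpos : 0 < δ ^ ((1:ℝ)/(k:ℝ)) := Real.rpow_pos_of_pos hδ _
    have hpow : (δ ^ ((1:ℝ)/(k:ℝ)))^(k-1) = δ ^ (((k:ℝ)-1)/(k:ℝ)) := by
      rw [← Real.rpow_natCast (δ ^ ((1:ℝ)/(k:ℝ))) (k-1), ← Real.rpow_mul hδ.le]
      congr 1
      have : ((k-1 : ℕ):ℝ) = (k:ℝ) - 1 := by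
        have := hk; push_cast [Nat.cast_sub hk]; ring
      rw [this]; ring
    have hdiv : δ ^ (((k:ℝ)-1)/(k:ℝ)) / δ = a := by
      have hk0 : ((k:ℝ)) ≠ 0 := by positivity
      have he : ((k:ℝ)-1)/(k:ℝ) - 1 = -(1/(k:ℝ)) := by field_simp; ring
      rw [ha_def, ← he, Real.rpow_sub hδ, Real.rpow_one]
    have htpow : (1/(2*a))^(k-1) ≤ t^(k-1) := pow_le_pow_left₀ (by positivity) hta _
    have hr : (1/(2*a))^(k-1) = δ ^ (((k:ℝ)-1)/(k:ℝ)) / 2^(k-1) := by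
      rw [show (1:ℝ)/(2*a) = (1/a) * (1/2) by ring, mul_pow, hainv, hpow]
      rw [one_div, inv_pow, ← div_eq_mul_inv]
    have hkpow : (2:ℝ) * 2^(k-1) ≤ 2^M := by
      have h2k : (2:ℝ) * 2^(k-1) = 2^k := by
        rw [← pow_succ']
        congr 1
        omega
      rw [h2k]
      exact pow_le_pow_right₀ (by norm_num) hkM
    have hfirst : (2 / 2^M) * a ≤ (k:ℝ)^2 * t^(k-1) / δ := by
      have h1 : (1:ℝ) ≤ (k:ℝ)^2 := by
        have : (1:ℝ) ≤ (k:ℝ) := by exact_mod_cast hk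
        nlinarith
      have h3 : δ ^ (((k:ℝ)-1)/(k:ℝ)) / 2^(k-1) / δ ≤ t^(k-1) / δ := by
        apply div_le_div_of_nonneg_right ?_ hδ.le
        calc δ ^ (((k:ℝ)-1)/(k:ℝ)) / 2^(k-1) = (1/(2*a))^(k-1) := hr.symm
          _ ≤ t^(k-1) := htpow
      have h4 : δ ^ (((k:ℝ)-1)/(k:ℝ)) / 2^(k-1) / δ = a / 2^(k-1) := by
        rw [div_right_comm, hdiv]
      have h5 : (2 / 2^M) * a ≤ a / 2^(k-1) := by
        rw [div_mul_eq_mul_div, div_le_div_iff₀ h2M (by positivity)]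
        nlinarith [mul_le_mul_of_nonneg_left hkpow ha.le]
      have h6 : t^(k-1) / δ ≤ (k:ℝ)^2 * t^(k-1) / δ := by
        apply div_le_div_of_nonneg_right ?_ hδ.le
        nlinarith [pow_nonneg ht (k-1)]
      calc (2 / 2^M) * a ≤ a / 2^(k-1) := h5
        _ = δ ^ (((k:ℝ)-1)/(k:ℝ)) / 2^(k-1) / δ := h4.symm
        _ ≤ t^(k-1) / δ := h3
        _ ≤ (k:ℝ)^2 * t^(k-1) / δ := h6
    have hcoef : C * δ ^ (-(1/(M:ℝ))) ≤ (2/2^M - ε/4) * a := by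
      have hc : C ≤ 2/2^M - ε/4 := by
        have hp : (0:ℝ) < 1/2^M := by positivity
        have h2x : (2:ℝ)/2^M = 2*(1/2^M) := by ring
        rw [h2x] at hεM ⊢
        linarith
      calc C * δ ^ (-(1/(M:ℝ))) ≤ C * a := by
            exact mul_le_mul_of_nonneg_left hmono hC0.le
        _ ≤ (2/2^M - ε/4) * a := by
            apply mul_le_mul_of_nonneg_right hc ha.le
    calc C * δ ^ (-(1/(M:ℝ))) ≤ (2/2^M - ε/4) * a := hcoef
      _ = (2/2^M) * a + (-(ε * a/4)) := by ring
      _ ≤ (k:ℝ)^2 * t^(k-1)/δ + ε * a * (1-a*t)/(1+a*t)^3 := by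
          apply add_le_add hfirst hsecond


lemma pow_factor (k : ℕ) (hk : 1 ≤ k) (t : ℝ) :
    (k:ℝ)*t^(k-1) + t * ((k:ℝ)*(((k-1:ℕ):ℝ)*t^(k-1-1))) = (k:ℝ)^2 * t^(k-1) := by
  rcases eq_or_lt_of_le hk with h1 | h2
  · rw [← h1]; norm_num
  · obtain ⟨j, rfl⟩ : ∃ j, k = j + 2 := ⟨k - 2, by omega⟩
    have e1 : j + 2 - 1 = j + 1 := by omega
    rw [e1]
    simp only [Nat.add_sub_cancel]
    push_cast
    ring

lemma levi_pow (k : ℕ) (hk : 1 ≤ k) (z s : ℂ) :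
    levi (fun w : ℂ => Complex.normSq w ^ k) z s
      = (k:ℝ)^2 * Complex.normSq z ^ (k-1) * Complex.normSq s := by
  have h := levi_1d (fun t => t^k) (fun t => (k:ℝ)*t^(k-1))
      (fun t => (k:ℝ)*(((k-1:ℕ):ℝ)*t^(k-1-1))) Set.univ (fun t _ => Set.mem_univ t)
      (fun t _ => hasDerivAt_pow k t)
      (fun t _ => ((hasDerivAt_pow (k-1) t).const_mul ((k:ℝ)))) z s
  rw [h]
  have := pow_factor k hk (Complex.normSq z)
  calc ((k:ℝ) * Complex.normSq z ^ (k-1)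
        + Complex.normSq z * ((k:ℝ)*(((k-1:ℕ):ℝ) * Complex.normSq z ^ (k-1-1))))
          * Complex.normSq s
      = ((k:ℝ) * Complex.normSq z ^ (k-1)
        + Complex.normSq z * ((k:ℝ)*(((k-1:ℕ):ℝ) * Complex.normSq z ^ (k-1-1))))
          * Complex.normSq s := rfl
    _ = (k:ℝ)^2 * Complex.normSq z ^ (k-1) * Complex.normSq s := by rw [this]

lemma levi_bump (ε a : ℝ) (ha : 0 < a) (z s : ℂ) :
    levi (fun w : ℂ => ε * (a * Complex.normSq w / (1 + a * Complex.normSq w))) z s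
      = ε * a * (1 - a * Complex.normSq z) / (1 + a * Complex.normSq z)^3
          * Complex.normSq s := by
  set T : Set ℝ := {t | 0 < 1 + a * t} with hT_def
  have hTm : ∀ t : ℝ, 0 ≤ t → t ∈ T := by
    intro t ht
    simp only [hT_def, Set.mem_setOf_eq]
    positivity
  have hd1 : ∀ t ∈ T, HasDerivAt (fun t => ε * (a * t / (1 + a * t)))
      (ε * (a / (1 + a * t)^2)) t := by
    intro t htT
    have hne : (1 + a * t) ≠ 0 := ne_of_gt htT
    have h1 : HasDerivAt (fun t : ℝ => a * t) a t := by
      simpa using (hasDerivAt_id t).const_mul a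
    have h2 : HasDerivAt (fun t : ℝ => 1 + a * t) a t := by
      simpa using h1.const_add 1
    have h3 := (h1.div h2 hne).const_mul ε
    have he : a * (1 + a * t) - a * t * a = a := by ring
    exact h3.congr_deriv (by rw [he])
  have hd2 : ∀ t ∈ T, HasDerivAt (fun t => ε * (a / (1 + a * t)^2))
      (-2 * ε * a^2 / (1 + a * t)^3) t := by
    intro t htT
    have hne : (1 + a * t) ≠ 0 := ne_of_gt htT
    have h1 : HasDerivAt (fun t : ℝ => a * t) a t := by
      simpa using (hasDerivAt_id t).const_mul a
    have h2 : HasDerivAt (fun t : ℝ => 1 + a * t) a t := by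
      simpa using h1.const_add 1
    have h4 : HasDerivAt (fun t : ℝ => (1 + a * t)^2) (2 * (1 + a * t) * a) t := by
      have := h2.pow 2
      exact this.congr_deriv (by push_cast; ring)
    have h5 : HasDerivAt (fun t : ℝ => ε * a / (1 + a * t)^2)
        ((0 * (1 + a*t)^2 - (ε * a) * (2 * (1 + a*t) * a)) / ((1 + a*t)^2)^2) t :=
      (hasDerivAt_const t (ε * a)).div h4 (pow_ne_zero 2 hne)
    have heq : (fun t : ℝ => ε * (a / (1 + a * t)^2))
        = fun t : ℝ => ε * a / (1 + a * t)^2 := by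
      funext x; ring
    rw [heq]
    convert h5 using 1
    field_simp
    ring
  have h := levi_1d (fun t => ε * (a * t / (1 + a * t)))
      (fun t => ε * (a / (1 + a * t)^2)) (fun t => -2 * ε * a^2 / (1 + a * t)^3)
      T hTm hd1 hd2 z s
  rw [h]
  have hpos : (0:ℝ) < 1 + a * Complex.normSq z := by
    have := Complex.normSq_nonneg z
    positivity
  have hne : (1 + a * Complex.normSq z) ≠ 0 := ne_of_gt hpos
  congr 1
  field_simp
  ring

lemma contDiff_normSq : ContDiff ℝ (⊤ : ℕ∞) Complex.normSq := by
  have hfun : Complex.normSq = fun z : ℂ => z.re * z.re + z.im * z.im :=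
    funext fun z => Complex.normSq_apply z
  rw [hfun]
  exact (Complex.reCLM.contDiff.mul Complex.reCLM.contDiff).add
    (Complex.imCLM.contDiff.mul Complex.imCLM.contDiff)

lemma contDiff_bump (ε a : ℝ) (ha : 0 < a) :
    ContDiff ℝ (⊤ : ℕ∞) (fun w : ℂ => ε * (a * Complex.normSq w / (1 + a * Complex.normSq w))) := by
  have hdiv : ContDiff ℝ (⊤ : ℕ∞) (fun w : ℂ => a * Complex.normSq w / (1 + a * Complex.normSq w)) := by
    apply ContDiff.div
    · exact contDiff_const.mul contDiff_normSq
    · exact contDiff_const.add (contDiff_const.mul contDiff_normSq)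
    · intro w
      have := Complex.normSq_nonneg w
      positivity
  exact contDiff_const.mul hdiv

lemma contDiff_coord {n : ℕ} (g : ℂ → ℝ) (hg : ContDiff ℝ (⊤ : ℕ∞) g) (i : Fin n) :
    ContDiff ℝ (⊤ : ℕ∞) (fun w : Cn n => g (w i)) := by
  have : (fun w : Cn n => g (w i))
      = g ∘ ((EuclideanSpace.proj i : Cn n →L[ℂ] ℂ).restrictScalars ℝ) := rfl
  rw [this]
  exact hg.comp (ContinuousLinearMap.contDiff _)

end LeviAux

set_option maxHeartbeats 1000000 in
/-- Theorem 3.1, resolver form: if the complex Hessian of `u` dominates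
that of the diagonal model `q(z) = Σ |z_i|^{2m_i}`, then the hypothesis of the Main
Lemma holds with `ε = 1/(2m)`, `m = max m_i`. -/
theorem resolver_for_dominating_diagonal (n : ℕ) (mi : Fin n → ℕ) (hmi : ∀ i, 1 ≤ mi i)
    (m : ℕ) (hm : ∀ i, mi i ≤ m) (hm' : ∃ i, mi i = m)
    (V : Set (Cn n)) (hV : IsOpen V) (h0V : (0 : Cn n) ∈ V)
    (u : Cn n → ℝ) (hu : ContDiffOn ℝ (⊤ : ℕ∞) u V) (hu0 : u 0 = 0)
    (hdom : ∀ z ∈ V, ∀ s : Cn n,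
      levi (fun w => ∑ i, ‖w i‖ ^ (2 * mi i)) z s ≤ levi u z s) :
    ∃ U : Set (Cn n), IsOpen U ∧ (0 : Cn n) ∈ U ∧ closure U ⊆ V ∧ IsCompact (closure U) ∧
      ∃ C > (0 : ℝ), ∃ δ₀ > (0 : ℝ), ∀ δ : ℝ, 0 < δ → δ < δ₀ →
        ∃ ρ : Cn n → ℝ, ContDiffOn ℝ (⊤ : ℕ∞) ρ U ∧
          (∀ z ∈ U, 0 ≤ ρ z ∧ ρ z ≤ 1) ∧
          (∀ z ∈ U, ∀ s : Cn n,
            C * δ ^ (-(1 / (m : ℝ))) * ‖s‖ ^ 2 ≤ levi (fun w => u w / δ + ρ w) z s) := by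
  classical
  obtain ⟨i₀, hi₀⟩ := hm'
  have hm1 : 1 ≤ m := hi₀ ▸ hmi i₀
  obtain ⟨r, hr0, hrV⟩ := Metric.isOpen_iff.mp hV 0 h0V
  have hsubV : Metric.ball (0 : Cn n) (r/2) ⊆ V :=
    (Metric.ball_subset_ball (by linarith)).trans hrV
  have hclos : closure (Metric.ball (0 : Cn n) (r/2)) ⊆ V :=
    Metric.closure_ball_subset_closedBall.trans
      ((Metric.closedBall_subset_ball (by linarith)).trans hrV)
  refine ⟨Metric.ball 0 (r/2), Metric.isOpen_ball,
    Metric.mem_ball_self (by linarith), hclos,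
    (isCompact_closedBall _ _).of_isClosed_subset isClosed_closure
      Metric.closure_ball_subset_closedBall, ?_⟩
  set q : Cn n → ℝ := fun w => ∑ i, ‖w i‖ ^ (2 * mi i) with hqdef
  set ε₀ : ℝ := 1 / ((n+1) * 2^m) with hε₀def
  have hε₀pos : 0 < ε₀ := by positivity
  set C : ℝ := ε₀ * 4 / 27 with hCdef
  have hCpos : 0 < C := by positivity
  have h2m : (0:ℝ) < 2^m := by positivity
  have h2m1 : (1:ℝ) ≤ 2^m := one_le_pow₀ (by norm_num)
  have hεM : ε₀ ≤ 2 / 2^m := by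
    rw [hε₀def, div_le_div_iff₀ (by positivity) (by positivity)]
    nlinarith
  have hε₀le : ε₀ ≤ 1 / 2^m := by
    rw [hε₀def]
    apply one_div_le_one_div_of_le h2m
    nlinarith
  have hC2 : C ≤ 1 / 2^m := by
    rw [hCdef]
    nlinarith
  refine ⟨C, hCpos, 1, one_pos, ?_⟩
  intro δ hδ0 hδ1
  set a : Fin n → ℝ := fun i => δ ^ (-(1/(mi i : ℝ))) with ha_def
  have hapos : ∀ i, 0 < a i := fun i => Real.rpow_pos_of_pos hδ0 _
  set ρ : Cn n → ℝ := fun w => ∑ i, ε₀ * (a i * Complex.normSq (w i)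
    / (1 + a i * Complex.normSq (w i))) with hρdef
  have hρsmooth : ContDiff ℝ (⊤ : ℕ∞) ρ := by
    rw [hρdef]
    apply ContDiff.sum
    intro i _
    exact LeviAux.contDiff_coord _ (LeviAux.contDiff_bump ε₀ (a i) (hapos i)) i
  have hterm_nonneg : ∀ (i : Fin n) (w : Cn n), 0 ≤ ε₀ * (a i * Complex.normSq (w i)
      / (1 + a i * Complex.normSq (w i))) := by
    intro i w
    have h1 := Complex.normSq_nonneg (w i)
    have h2 := (hapos i).le
    positivity
  have hterm_le : ∀ (i : Fin n) (w : Cn n), ε₀ * (a i * Complex.normSq (w i)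
      / (1 + a i * Complex.normSq (w i))) ≤ ε₀ := by
    intro i w
    have h1 := Complex.normSq_nonneg (w i)
    have hx : 0 ≤ a i * Complex.normSq (w i) := mul_nonneg (hapos i).le h1
    have hfr : a i * Complex.normSq (w i) / (1 + a i * Complex.normSq (w i)) ≤ 1 := by
      rw [div_le_one (by positivity)]
      linarith
    nlinarith
  have hρ0 : ∀ w, 0 ≤ ρ w := fun w => Finset.sum_nonneg fun i _ => hterm_nonneg i w
  have hρ1 : ∀ w, ρ w ≤ 1 := by
    intro w
    have hb : ρ w ≤ ∑ _i : Fin n, ε₀ := Finset.sum_le_sum fun i _ => hterm_le i w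
    have hc : ∑ _i : Fin n, ε₀ = (n:ℝ) * ε₀ := by
      rw [Finset.sum_const, Finset.card_univ, Fintype.card_fin, nsmul_eq_mul]
    have hd : (n:ℝ) * ε₀ ≤ 1 := by
      rw [hε₀def, mul_one_div, div_le_one (by positivity)]
      nlinarith
    linarith [hb, hc ▸ hb]
  refine ⟨ρ, hρsmooth.contDiffOn, fun z _ => ⟨hρ0 z, hρ1 z⟩, ?_⟩
  intro z hzU s
  have hzV : z ∈ V := hsubV hzU
  have hu2 : ContDiffOn ℝ 2 (fun w => u w / δ) V := (hu.div_const δ).of_le (by exact WithTop.coe_le_coe.mpr le_top)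
  have hρ2 : ContDiffOn ℝ 2 ρ V := (hρsmooth.of_le (by exact WithTop.coe_le_coe.mpr le_top)).contDiffOn
  have hsplit : levi (fun w => u w / δ + ρ w) z s
      = levi (fun w => u w / δ) z s + levi ρ z s :=
    LeviAux.levi_add_open hV hzV hu2 hρ2 s
  have hsmul : levi (fun w => u w / δ) z s = (1/δ) * levi u z s := by
    have hfun : (fun w => u w / δ) = fun w => (1/δ) • u w := by
      funext w
      rw [smul_eq_mul]
      ring
    rw [hfun]
    exact LeviAux.levi_smul_open hV hzV (hu.of_le (by exact WithTop.coe_le_coe.mpr le_top)) (1/δ) s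
  have hq_eq : q = fun w : Cn n => ∑ i, Complex.normSq (w i) ^ (mi i) := by
    rw [hqdef]
    funext w
    apply Finset.sum_congr rfl
    intro i _
    rw [pow_mul, Complex.sq_norm]
  have hq_levi : levi q z s
      = ∑ i, (mi i : ℝ)^2 * Complex.normSq (z i) ^ (mi i - 1) * Complex.normSq (s i) := by
    rw [hq_eq]
    rw [LeviAux.levi_sum (fun (i : Fin n) (w : Cn n) => Complex.normSq (w i) ^ (mi i))
      Finset.univ
      (fun i _ => (LeviAux.contDiff_coord _ (LeviAux.contDiff_normSq.pow (mi i)) i).of_le (by exact WithTop.coe_le_coe.mpr le_top))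
      z s]
    apply Finset.sum_congr rfl
    intro i _
    rw [LeviAux.levi_comp_proj _ ((LeviAux.contDiff_normSq.pow (mi i)).of_le (by exact WithTop.coe_le_coe.mpr le_top)) i z s,
      LeviAux.levi_pow (mi i) (hmi i) (z i) (s i)]
  have hρ_levi : levi ρ z s = ∑ i, ε₀ * a i * (1 - a i * Complex.normSq (z i))
      / (1 + a i * Complex.normSq (z i))^3 * Complex.normSq (s i) := by
    rw [hρdef]
    rw [LeviAux.levi_sum (fun (i : Fin n) (w : Cn n) => ε₀ * (a i * Complex.normSq (w i)
        / (1 + a i * Complex.normSq (w i)))) Finset.univ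
      (fun i _ => (LeviAux.contDiff_coord _
        (LeviAux.contDiff_bump ε₀ (a i) (hapos i)) i).of_le (by exact WithTop.coe_le_coe.mpr le_top)) z s]
    apply Finset.sum_congr rfl
    intro i _
    rw [LeviAux.levi_comp_proj _ ((LeviAux.contDiff_bump ε₀ (a i) (hapos i)).of_le (by exact WithTop.coe_le_coe.mpr le_top)) i z s,
      LeviAux.levi_bump ε₀ (a i) (hapos i) (z i) (s i)]
  have hkey : ∀ i : Fin n,
      C * δ ^ (-(1/(m:ℝ))) * Complex.normSq (s i)
        ≤ (1/δ) * ((mi i:ℝ)^2 * Complex.normSq (z i) ^ (mi i - 1) * Complex.normSq (s i))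
          + ε₀ * a i * (1 - a i * Complex.normSq (z i))
              / (1 + a i * Complex.normSq (z i))^3 * Complex.normSq (s i) := by
    intro i
    have h := LeviAux.key_ineq (mi i) m (hmi i) (hm i) ε₀ C δ (Complex.normSq (z i))
      hδ0 hδ1 (Complex.normSq_nonneg _) hε₀pos hεM hCpos hCdef.le hC2
    rw [show δ ^ (-(1/((mi i):ℝ))) = a i from rfl] at h
    have h2 := mul_le_mul_of_nonneg_right h (Complex.normSq_nonneg (s i))
    calc C * δ ^ (-(1/(m:ℝ))) * Complex.normSq (s i) ≤
        ((mi i:ℝ)^2 * Complex.normSq (z i) ^ (mi i - 1) / δ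
          + ε₀ * a i * (1 - a i * Complex.normSq (z i))
              / (1 + a i * Complex.normSq (z i))^3) * Complex.normSq (s i) := h2
      _ = (1/δ) * ((mi i:ℝ)^2 * Complex.normSq (z i) ^ (mi i - 1) * Complex.normSq (s i))
          + ε₀ * a i * (1 - a i * Complex.normSq (z i))
              / (1 + a i * Complex.normSq (z i))^3 * Complex.normSq (s i) := by ring
  have hnorm : ‖s‖^2 = ∑ i, Complex.normSq (s i) := by
    rw [EuclideanSpace.norm_eq, Real.sq_sqrt (Finset.sum_nonneg fun i _ => sq_nonneg _)]
    apply Finset.sum_congr rfl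
    intro i _
    rw [Complex.sq_norm]
  have hdom' := hdom z hzV s
  have h1δ : (0:ℝ) ≤ 1/δ := by positivity
  calc C * δ ^ (-(1/(m:ℝ))) * ‖s‖^2
      = ∑ i, C * δ ^ (-(1/(m:ℝ))) * Complex.normSq (s i) := by
        rw [hnorm, Finset.mul_sum]
    _ ≤ ∑ i, ((1/δ) * ((mi i:ℝ)^2 * Complex.normSq (z i) ^ (mi i - 1) * Complex.normSq (s i))
          + ε₀ * a i * (1 - a i * Complex.normSq (z i))
              / (1 + a i * Complex.normSq (z i))^3 * Complex.normSq (s i)) :=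
        Finset.sum_le_sum fun i _ => hkey i
    _ = (1/δ) * (∑ i, (mi i:ℝ)^2 * Complex.normSq (z i) ^ (mi i - 1) * Complex.normSq (s i))
          + ∑ i, ε₀ * a i * (1 - a i * Complex.normSq (z i))
              / (1 + a i * Complex.normSq (z i))^3 * Complex.normSq (s i) := by
        rw [Finset.sum_add_distrib, Finset.mul_sum]
    _ = (1/δ) * levi q z s + levi ρ z s := by rw [hq_levi, hρ_levi]
    _ ≤ (1/δ) * levi u z s + levi ρ z s := by
        have := mul_le_mul_of_nonneg_left hdom' h1δ
        linarith
    _ = levi (fun w => u w / δ + ρ w) z s := by rw [hsplit, hsmul]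


end
end

section
/- Let m ≥ 1 be an integer and fix a smooth function χ : [0, ∞) → R with 0 ≤ χ(t) ≤ 1 for all t ≥ 0, χ(t) = t for t ≤ 1/2, and χ(t) = 0 for t ≥ 1. Then there exist constants c > 0 and C > 0 such that for every sufficiently small δ > 0, the smooth function g_δ : C → R defined by g_δ(w) = |w|^{2m}/δ + c·χ(|w|²/δ^{1/m}) satisfies (∂²g_δ/∂w∂w̄)(w) ≥ C·δ^{-1/m} for all w ∈ C. -/
open scoped BigOperators

noncomputable section

/-- The bilinear map `B w v = 2 (w.re v.re + w.im v.im)` as a CLM; this is the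
derivative of `Complex.normSq`. -/
def Bmap : ℂ →L[ℝ] ℂ →L[ℝ] ℝ :=
  (2:ℝ) • (Complex.reCLM.smulRight Complex.reCLM + Complex.imCLM.smulRight Complex.imCLM)

@[simp] lemma Bmap_apply (w v : ℂ) : Bmap w v = 2 * (w.re * v.re + w.im * v.im) := by
  simp [Bmap]; ring

lemma hasFDerivAt_normSq' (w : ℂ) : HasFDerivAt (fun v : ℂ => Complex.normSq v) (Bmap w) w := by
  have h1 : HasFDerivAt (fun v : ℂ => v.re * v.re + v.im * v.im)
      ((w.re • Complex.reCLM + w.re • Complex.reCLM)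
        + (w.im • Complex.imCLM + w.im • Complex.imCLM)) w :=
    (Complex.reCLM.hasFDerivAt.mul Complex.reCLM.hasFDerivAt).add
      (Complex.imCLM.hasFDerivAt.mul Complex.imCLM.hasFDerivAt)
  have hfun : (fun v : ℂ => Complex.normSq v) = fun v : ℂ => v.re * v.re + v.im * v.im := by
    funext v; exact Complex.normSq_apply v
  rw [hfun]
  convert h1 using 1
  ext v
  simp [Bmap]
  ring

/-- Levi form of a radial function `G ∘ normSq` in the direction `1`:
it equals `G''(|w|²)·|w|² + G'(|w|²)`. -/
lemma levi_radial (G G₁ G₂ : ℝ → ℝ)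
    (hG1 : ∀ t, HasDerivAt G (G₁ t) t) (hG2 : ∀ t, HasDerivAt G₁ (G₂ t) t) (w : ℂ) :
    levi (fun v : ℂ => G (Complex.normSq v)) w 1
      = G₂ (Complex.normSq w) * Complex.normSq w + G₁ (Complex.normSq w) := by
  have hfd : ∀ z : ℂ, HasFDerivAt (fun v : ℂ => G (Complex.normSq v))
      (G₁ (Complex.normSq z) • Bmap z) z := fun z =>
    (hG1 (Complex.normSq z)).comp_hasFDerivAt z (hasFDerivAt_normSq' z)
  have hfderiv : fderiv ℝ (fun v : ℂ => G (Complex.normSq v))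
      = fun z => G₁ (Complex.normSq z) • Bmap z := funext fun z => (hfd z).fderiv
  have hsd : HasFDerivAt (fun z : ℂ => G₁ (Complex.normSq z) • Bmap z)
      (G₁ (Complex.normSq w) • Bmap
        + (G₂ (Complex.normSq w) • Bmap w).smulRight (Bmap w)) w :=
    HasFDerivAt.smul
      ((hG2 (Complex.normSq w)).comp_hasFDerivAt w (hasFDerivAt_normSq' w))
      Bmap.hasFDerivAt
  have key : ∀ u : ℂ, iteratedFDeriv ℝ 2 (fun v : ℂ => G (Complex.normSq v)) w ![u, u]
      = G₁ (Complex.normSq w) * Bmap u u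
        + (G₂ (Complex.normSq w) * Bmap w u) * Bmap w u := by
    intro u
    rw [iteratedFDeriv_two_apply, hfderiv, hsd.fderiv]
    simp [ContinuousLinearMap.smulRight_apply]
  rw [levi, key, key]
  have h1 : Complex.I • (1:ℂ) = Complex.I := by simp
  rw [h1]
  simp [Complex.normSq_apply]
  ring

/-- One-sided determination of the derivative: if two differentiable functions agree on
`[a, b]` then their derivatives agree at `a`. -/
lemma deriv_eq_of_eqOn_Icc {f g : ℝ → ℝ} {a b : ℝ} (hab : a < b)
    (hf : DifferentiableAt ℝ f a) (hg : DifferentiableAt ℝ g a)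
    (h : Set.EqOn f g (Set.Icc a b)) : deriv f a = deriv g a := by
  have hu : UniqueDiffWithinAt ℝ (Set.Icc a b) a :=
    (uniqueDiffOn_Icc hab) a (Set.left_mem_Icc.2 hab.le)
  have h1 : HasDerivWithinAt f (deriv f a) (Set.Icc a b) a :=
    hf.hasDerivAt.hasDerivWithinAt
  have h2 : HasDerivWithinAt f (deriv g a) (Set.Icc a b) a :=
    (hg.hasDerivAt.hasDerivWithinAt).congr (fun y hy => h hy)
      (h (Set.left_mem_Icc.2 hab.le))
  exact (h1.derivWithin hu).symm.trans (h2.derivWithin hu)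

/-- The combination `m·(m-1)·s^(m-2)·s + m·s^(m-1) = m²·s^(m-1)` (ℕ-subtraction safe). -/
lemma poly_part (m : ℕ) (hm : 1 ≤ m) (δ s : ℝ) :
    ((m:ℝ) * ((↑(m-1) : ℝ) * s^(m-1-1)) / δ) * s + (m:ℝ) * s^(m-1) / δ
      = (m:ℝ)^2 * s^(m-1) / δ := by
  obtain _ | m := m
  · exact absurd hm (by norm_num)
  obtain _ | m := m
  · norm_num
  · have h1 : ∀ k : ℕ, k + 2 - 1 = k + 1 := fun k => rfl
    have h2 : ∀ k : ℕ, k + 1 - 1 = k := fun k => rfl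
    rw [h1, h2]
    push_cast
    ring

/-- the one-variable core estimate in the proof of Theorem 3.1:
`∂²g_δ/∂w∂w̄ ≥ C δ^{-1/m}` for `g_δ(w) = |w|^{2m}/δ + c χ(|w|²/δ^{1/m})`.
Here `levi g w 1 = (1/4)·Δg(w) = (∂²g/∂w∂w̄)(w)`. -/
theorem one_variable_estimate (m : ℕ) (hm : 1 ≤ m)
    (χ : ℝ → ℝ) (hχ : ContDiff ℝ (⊤ : ℕ∞) χ)
    (hχ01 : ∀ t : ℝ, 0 ≤ t → 0 ≤ χ t ∧ χ t ≤ 1)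
    (hχid : ∀ t : ℝ, 0 ≤ t → t ≤ 1 / 2 → χ t = t)
    (hχ0 : ∀ t : ℝ, 1 ≤ t → χ t = 0) :
    ∃ c > (0 : ℝ), ∃ C > (0 : ℝ), ∃ δ₀ > (0 : ℝ), ∀ δ : ℝ, 0 < δ → δ < δ₀ →
      ∀ w : ℂ,
        C * δ ^ (-(1 / (m : ℝ))) ≤
          levi (fun v : ℂ => ‖v‖ ^ (2 * m) / δ
            + c * χ (‖v‖ ^ 2 / δ ^ ((1 : ℝ) / (m : ℝ)))) w 1 := by
  -- derivatives of χ
  have hχ' : ContDiff ℝ (⊤ : ℕ∞) χ := hχ.of_le (by simp)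
  have hχd : Differentiable ℝ χ := hχ'.differentiable (by simp)
  have hφcd : ContDiff ℝ (⊤ : ℕ∞) (deriv χ) := (contDiff_infty_iff_deriv.mp hχ').2
  have hφd : Differentiable ℝ (deriv χ) := hφcd.differentiable (by simp)
  have hψc : Continuous (deriv (deriv χ)) := (contDiff_infty_iff_deriv.mp hφcd).2.continuous
  have hφ_lt : ∀ t : ℝ, 0 ≤ t → t < 1/2 → deriv χ t = 1 := by
    intro t ht0 ht
    have := deriv_eq_of_eqOn_Icc (g := fun x : ℝ => x) ht (hχd t)
      differentiableAt_id (fun y hy => hχid y (ht0.trans hy.1) hy.2)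
    rwa [deriv_id''] at this
  have hψ_lt : ∀ t : ℝ, 0 ≤ t → t < 1/2 → deriv (deriv χ) t = 0 := by
    intro t ht0 ht
    have hb : t < (t + 1/2)/2 := by linarith
    have hb2 : (t + 1/2)/2 < 1/2 := by linarith
    have := deriv_eq_of_eqOn_Icc (g := fun _ : ℝ => (1:ℝ)) hb
      (hφd t) (differentiableAt_const _)
      (fun y hy => hφ_lt y (ht0.trans hy.1) (lt_of_le_of_lt hy.2 hb2))
    rwa [deriv_const] at this
  have hφ_ge : ∀ t : ℝ, 1 ≤ t → deriv χ t = 0 := by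
    intro t ht
    have := deriv_eq_of_eqOn_Icc (g := fun _ : ℝ => (0:ℝ)) (by linarith : t < t + 1)
      (hχd t) (differentiableAt_const _) (fun y hy => hχ0 y (ht.trans hy.1))
    rwa [deriv_const] at this
  have hψ_ge : ∀ t : ℝ, 1 ≤ t → deriv (deriv χ) t = 0 := by
    intro t ht
    have := deriv_eq_of_eqOn_Icc (g := fun _ : ℝ => (0:ℝ)) (by linarith : t < t + 1)
      (hφd t) (differentiableAt_const _) (fun y hy => hφ_ge y (ht.trans hy.1))
    rwa [deriv_const] at this
  -- bound for the derivatives on [1/2, 1]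
  obtain ⟨M₁, hM₁⟩ := (isCompact_Icc (a := (1/2:ℝ)) (b := 1)).exists_bound_of_continuousOn
    hφcd.continuous.continuousOn
  obtain ⟨M₂, hM₂⟩ := (isCompact_Icc (a := (1/2:ℝ)) (b := 1)).exists_bound_of_continuousOn
    hψc.continuousOn
  obtain ⟨M, hMdef⟩ : ∃ M : ℝ, M = max 1 (max M₁ M₂) := ⟨_, rfl⟩
  have hM1 : (1:ℝ) ≤ M := hMdef ▸ le_max_left _ _
  have hM0 : (0:ℝ) ≤ M := by linarith
  have hMφ : ∀ x ∈ Set.Icc (1/2:ℝ) 1, |deriv χ x| ≤ M := fun x hx =>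
    (Real.norm_eq_abs _ ▸ hM₁ x hx).trans ((le_max_left M₁ M₂).trans (hMdef ▸ le_max_right _ _))
  have hMψ : ∀ x ∈ Set.Icc (1/2:ℝ) 1, |deriv (deriv χ) x| ≤ M := fun x hx =>
    (Real.norm_eq_abs _ ▸ hM₂ x hx).trans ((le_max_right M₁ M₂).trans (hMdef ▸ le_max_right _ _))
  -- constants
  have hm0 : (0:ℝ) < (m:ℝ) := by exact_mod_cast hm
  obtain ⟨K, hKdef⟩ : ∃ K : ℝ, K = (m:ℝ)^2 * (1/2)^(m-1) := ⟨_, rfl⟩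
  have hK : 0 < K := by rw [hKdef]; positivity
  obtain ⟨c, hcdef⟩ : ∃ c : ℝ, c = K / (4 * M) := ⟨_, rfl⟩
  have hc : 0 < c := by rw [hcdef]; positivity
  have hcK : c ≤ K / 4 := by
    rw [hcdef]
    apply div_le_div_of_nonneg_left hK.le (by norm_num)
    nlinarith
  have hKm : K ≤ (m:ℝ)^2 := by
    have h1 : ((1:ℝ)/2)^(m-1) ≤ 1 := pow_le_one₀ (by norm_num) (by norm_num)
    nlinarith [sq_nonneg (m:ℝ)]
  refine ⟨c, hc, c, hc, 1, one_pos, ?_⟩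
  intro δ hδ _ w
  obtain ⟨ε, hεdef⟩ : ∃ ε : ℝ, ε = δ ^ ((1:ℝ)/(m:ℝ)) := ⟨_, rfl⟩
  have hε0 : 0 < ε := hεdef ▸ Real.rpow_pos_of_pos hδ _
  have hεm : ε ^ m = δ := by
    rw [hεdef, ← Real.rpow_natCast (δ ^ ((1:ℝ)/(m:ℝ))) m, ← Real.rpow_mul hδ.le,
      one_div_mul_cancel hm0.ne', Real.rpow_one]
  have hδε : δ = ε^(m-1) * ε := by
    rw [← hεm, ← pow_succ, Nat.sub_add_cancel hm]
  have hrneg : δ ^ (-(1/(m:ℝ))) = ε⁻¹ := by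
    rw [Real.rpow_neg hδ.le, hεdef]
  -- rewrite the function as a radial function
  have hfun : (fun v : ℂ => ‖v‖ ^ (2 * m) / δ + c * χ (‖v‖ ^ 2 / ε))
      = fun v : ℂ => Complex.normSq v ^ m / δ + c * χ (Complex.normSq v / ε) := by
    funext v
    rw [pow_mul, Complex.sq_norm]
  -- derivatives of the radial profile
  have hdiv : ∀ t : ℝ, HasDerivAt (fun x : ℝ => x / ε) (1/ε) t := fun t =>
    (hasDerivAt_id t).div_const ε
  have hG1 : ∀ t : ℝ, HasDerivAt (fun x : ℝ => x ^ m / δ + c * χ (x / ε))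
      ((m:ℝ) * t^(m-1) / δ + c * (deriv χ (t/ε) * (1/ε))) t := by
    intro t
    have h1 := (hasDerivAt_pow m t).div_const δ
    have h2 : HasDerivAt (fun x : ℝ => χ (x / ε)) (deriv χ (t/ε) * (1/ε)) t := by
      have := ((hχd (t/ε)).hasDerivAt.comp t (hdiv t)); exact this
    exact h1.add (h2.const_mul c)
  have hG2 : ∀ t : ℝ, HasDerivAt (fun x : ℝ => (m:ℝ) * x^(m-1) / δ + c * (deriv χ (x/ε) * (1/ε)))
      ((m:ℝ) * ((↑(m-1) : ℝ) * t^(m-1-1)) / δ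
        + c * (deriv (deriv χ) (t/ε) * (1/ε) * (1/ε))) t := by
    intro t
    have h1 := ((hasDerivAt_pow (m-1) t).const_mul (m:ℝ)).div_const δ
    have h2 : HasDerivAt (fun x : ℝ => deriv χ (x / ε)) (deriv (deriv χ) (t/ε) * (1/ε)) t := by
      have := ((hφd (t/ε)).hasDerivAt.comp t (hdiv t)); exact this
    exact h1.add ((h2.mul_const (1/ε)).const_mul c)
  -- compute the Levi form
  obtain ⟨s, hsdef⟩ : ∃ s : ℝ, s = Complex.normSq w := ⟨_, rfl⟩
  have hs0 : 0 ≤ s := hsdef ▸ Complex.normSq_nonneg w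
  have hlv := levi_radial (fun x : ℝ => x ^ m / δ + c * χ (x / ε))
    (fun t => (m:ℝ) * t^(m-1) / δ + c * (deriv χ (t/ε) * (1/ε)))
    (fun t => (m:ℝ) * ((↑(m-1) : ℝ) * t^(m-1-1)) / δ
        + c * (deriv (deriv χ) (t/ε) * (1/ε) * (1/ε))) hG1 hG2 w
  beta_reduce at hlv
  rw [hrneg, ← hεdef, hfun, hlv, ← hsdef]
  have hP := poly_part m hm δ s
  -- the target value
  have hval : ((m:ℝ) * ((↑(m-1) : ℝ) * s^(m-1-1)) / δ
        + c * (deriv (deriv χ) (s/ε) * (1/ε) * (1/ε))) * s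
      + ((m:ℝ) * s^(m-1) / δ + c * (deriv χ (s/ε) * (1/ε)))
      = (m:ℝ)^2 * s^(m-1) / δ + c * (deriv (deriv χ) (s/ε) * (s/ε^2))
        + c * (deriv χ (s/ε) * (1/ε)) := by
    linear_combination hP
  rw [hval]
  obtain ⟨t, htdef⟩ : ∃ t : ℝ, t = s / ε := ⟨_, rfl⟩
  rw [← htdef]
  have ht0 : 0 ≤ t := htdef ▸ div_nonneg hs0 hε0.le
  rcases lt_or_ge t (1/2) with hA | hA
  · -- inner region: χ' = 1, χ'' = 0
    rw [hφ_lt t ht0 hA, hψ_lt t ht0 hA]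
    have h0 : (0:ℝ) ≤ (m:ℝ)^2 * s^(m-1) / δ := by positivity
    have e1 : c * ((0:ℝ) * (s/ε^2)) = 0 := by ring
    have e2 : c * ((1:ℝ) * (1/ε)) = c * ε⁻¹ := by rw [one_mul, one_div]
    linarith [h0, e1.le, e1.ge, e2.le, e2.ge]
  rcases le_or_gt t 1 with hB | hC
  · -- transition annulus
    have hφb : |deriv χ t| ≤ M := hMφ t ⟨hA, hB⟩
    have hψb : |deriv (deriv χ) t| ≤ M := hMψ t ⟨hA, hB⟩
    have hA2 : 1/2 ≤ s / ε := by rw [← htdef]; exact hA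
    have hB2 : s / ε ≤ 1 := by rw [← htdef]; exact hB
    have hsl : ε / 2 ≤ s := by
      have := (le_div_iff₀ hε0).mp hA2
      linarith
    have hsu : s ≤ ε := (div_le_one hε0).mp hB2
    have hpow : (ε/2)^(m-1) ≤ s^(m-1) := pow_le_pow_left₀ (by positivity) hsl _
    have hhalf : (ε/2)^(m-1) = (1/2)^(m-1) * ε^(m-1) := by
      rw [← mul_pow]; congr 1; ring
    have hKε : K * ε^(m-1) = (m:ℝ)^2 * (ε/2)^(m-1) := by
      rw [hhalf, hKdef]; ring
    have hA1 : K * ε⁻¹ ≤ (m:ℝ)^2 * s^(m-1) / δ := by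
      have hKdiv : K * ε⁻¹ = K / ε := (div_eq_mul_inv K ε).symm
      rw [hKdiv, div_le_div_iff₀ hε0 hδ, hδε]
      have h5 : (m:ℝ)^2 * (ε/2)^(m-1) ≤ (m:ℝ)^2 * s^(m-1) :=
        mul_le_mul_of_nonneg_left hpow (by positivity)
      calc K * (ε^(m-1) * ε) = (K * ε^(m-1)) * ε := by ring
        _ = ((m:ℝ)^2 * (ε/2)^(m-1)) * ε := by rw [hKε]
        _ ≤ ((m:ℝ)^2 * s^(m-1)) * ε := mul_le_mul_of_nonneg_right h5 hε0.le
        _ = (m:ℝ)^2 * s^(m-1) * ε := by ring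
    have hr0 : (0:ℝ) ≤ s / ε^2 := by positivity
    have hru : s / ε^2 ≤ ε⁻¹ := by
      have h6 : s / ε^2 ≤ ε / ε^2 := by gcongr
      have h7 : ε / ε^2 = ε⁻¹ := by
        rw [sq, div_mul_eq_div_div, div_self hε0.ne', one_div]
      linarith [h6, h7.le, h7.ge]
    have hψl : -M ≤ deriv (deriv χ) t := (abs_le.mp hψb).1
    have hψu : deriv (deriv χ) t ≤ M := (abs_le.mp hψb).2
    have hφl : -M ≤ deriv χ t := (abs_le.mp hφb).1
    have hεinv : (0:ℝ) ≤ ε⁻¹ := inv_nonneg.mpr hε0.le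
    have k3 : -(M * ε⁻¹) ≤ deriv (deriv χ) t * (s/ε^2) := by
      have k1 := mul_le_mul_of_nonneg_right hψl hr0
      have k2 := mul_le_mul_of_nonneg_left hru hM0
      linarith
    have hB1 := mul_le_mul_of_nonneg_left k3 hc.le
    have k4 : -(M * ε⁻¹) ≤ deriv χ t * (1/ε) := by
      have k5 := mul_le_mul_of_nonneg_right hφl hεinv
      have k6 : deriv χ t * (1/ε) = deriv χ t * ε⁻¹ := by rw [one_div]
      linarith
    have hC1 := mul_le_mul_of_nonneg_left k4 hc.le
    have hMne : M ≠ 0 := by linarith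
    have hcM : c * M = K / 4 := by
      rw [hcdef, div_mul_eq_mul_div, mul_comm K M, mul_comm (4:ℝ) M,
        mul_div_mul_left _ _ hMne]
    have h9 : (K - (c + 2*(c*M))) * ε⁻¹ ≥ 0 :=
      mul_nonneg (by rw [hcM]; linarith) hεinv
    linarith [hA1, hB1, hC1, h9]
  · -- outer region: χ' = χ'' = 0
    rw [hφ_ge t hC.le, hψ_ge t hC.le]
    have hC2 : 1 ≤ s / ε := by rw [← htdef]; exact hC.le
    have hsε : ε ≤ s := by
      have := (one_le_div hε0).mp hC2
      linarith
    have h1 : ε^(m-1) ≤ s^(m-1) := pow_le_pow_left₀ hε0.le hsε _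
    have hcm : c ≤ (m:ℝ)^2 := by linarith [hcK, hKm, hK]
    have key : c * ε⁻¹ ≤ (m:ℝ)^2 * s^(m-1) / δ := by
      have hcdiv : c * ε⁻¹ = c / ε := (div_eq_mul_inv c ε).symm
      rw [hcdiv, div_le_div_iff₀ hε0 hδ, hδε]
      have k6 : c * ε^(m-1) ≤ (m:ℝ)^2 * s^(m-1) :=
        mul_le_mul hcm h1 (pow_nonneg hε0.le _) (by positivity)
      have k7 := mul_le_mul_of_nonneg_right k6 hε0.le
      linarith [k7]
    linarith [key]

end
end
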